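/- arXiv:2402.08587 — 9 statements merged into one kernel-verified Lean document; each statement's English description precedes it below -/
import Mathlib

section
/- Let $(R,+,\cdot)$ be a commutative ring and let $A:R\to\mathbb{R}$ be an additive function (i.e., $A(x+y)=A(x)+A(y)$ for all $x,y\in R$). If one of the following conditions holds: (i) $A=0$ identically; (ii) $A(x^2)\geq 0$ for all $x\in R$; (iii) $A(x^2)\leq 0$ for all $x\in R$; then $A(xy)^2\leq A(x^2)A(y^2)$ for all $x,y\in R$. -/
lemma aux_cs_nonneg
    {R : Type*} [NonUnitalCommRing R] (A : R → ℝ)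
    (hadd : ∀ x y : R, A (x + y) = A x + A y)
    (h : ∀ x : R, 0 ≤ A (x * x)) :
    ∀ x y : R, A (x * y) ^ 2 ≤ A (x * x) * A (y * y) := by
  intro x y
  set f : R →+ ℝ := AddMonoidHom.mk' A hadd with hf
  have hfA : ∀ z : R, f z = A z := fun z => rfl
  set a := A (x * x) with ha
  set b := A (x * y) with hb
  set c := A (y * y) with hc
  have key : ∀ n m : ℤ, 0 ≤ a * (n : ℝ)^2 + 2*b*((n:ℝ)*(m:ℝ)) + c*(m:ℝ)^2 := by
    intro n m
    have expand : (n • x + m • y) * (n • x + m • y)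
        = (n*n) • (x*x) + ((n*m) • (x*y) + ((m*n) • (x*y) + (m*m) • (y*y))) := by
      rw [add_mul, mul_add, mul_add, smul_mul_assoc, smul_mul_assoc, smul_mul_assoc,
        smul_mul_assoc, mul_smul_comm, mul_smul_comm, mul_smul_comm, mul_smul_comm,
        smul_smul, smul_smul, smul_smul, smul_smul, mul_comm y x, add_assoc]
    have h1 : A ((n • x + m • y) * (n • x + m • y))
        = a * (n : ℝ)^2 + 2*b*((n:ℝ)*(m:ℝ)) + c*(m:ℝ)^2 := by
      rw [← hfA, expand, map_add, map_add, map_add, map_zsmul, map_zsmul, map_zsmul,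
        map_zsmul, hfA, hfA, hfA]
      simp only [zsmul_eq_mul]
      push_cast
      ring
    have := h (n • x + m • y)
    linarith [h1 ▸ this]
  have keyq : ∀ t : ℝ, 0 ≤ a * t^2 + (2*b) * t + c := by
    have hq : ∀ q : ℚ, 0 ≤ a * (q:ℝ)^2 + (2*b) * (q:ℝ) + c := by
      intro q
      have hk := key q.num q.den
      have hd : (0:ℝ) < (q.den:ℝ) := by exact_mod_cast q.pos
      have hcast : (q:ℝ) = (q.num:ℝ) / (q.den:ℝ) := by
        rw [Rat.cast_def]
      rw [hcast]
      rw [div_pow, ← sub_nonneg]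
      have h2 : a * ((q.num:ℝ)^2 / (q.den:ℝ)^2) + (2*b) * ((q.num:ℝ)/(q.den:ℝ)) + c - 0
          = (a * (q.num:ℝ)^2 + 2*b*((q.num:ℝ)*(q.den:ℝ)) + c*(q.den:ℝ)^2) / (q.den:ℝ)^2 := by
        field_simp
        ring
      rw [h2]
      exact div_nonneg hk (by positivity)
    intro t
    have hc' : Continuous fun s : ℝ => a * s^2 + (2*b) * s + c := by continuity
    have hcl : IsClosed {s : ℝ | 0 ≤ a * s^2 + (2*b) * s + c} :=
      isClosed_le continuous_const hc'
    have hdr : DenseRange ((↑) : ℚ → ℝ) := Rat.denseRange_cast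
    have hsub : Set.range ((↑) : ℚ → ℝ) ⊆ {s : ℝ | 0 ≤ a * s^2 + (2*b) * s + c} := by
      rintro s ⟨q, rfl⟩; exact hq q
    have : (Set.univ : Set ℝ) ⊆ {s : ℝ | 0 ≤ a * s^2 + (2*b) * s + c} := by
      rw [← hdr.closure_eq]
      exact closure_minimal hsub hcl
    exact this (Set.mem_univ t)
  have keyq' : ∀ t : ℝ, 0 ≤ a * (t * t) + (2*b) * t + c := by
    intro t; have := keyq t; rw [pow_two] at this; exact this
  have hdisc := discrim_le_zero keyq'
  rw [discrim] at hdisc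
  nlinarith [hdisc]

/-- If `A` is additive on a commutative ring and is identically zero,
or `A (x^2) ≥ 0` for all `x`, or `A (x^2) ≤ 0` for all `x`, then
`A (x*y)^2 ≤ A (x^2) * A (y^2)` for all `x, y`. -/
theorem cauchy_schwarz_of_additive_sign_condition
    {R : Type*} [NonUnitalCommRing R] (A : R → ℝ)
    (hadd : ∀ x y : R, A (x + y) = A x + A y)
    (hsign : (∀ x : R, A x = 0) ∨ (∀ x : R, 0 ≤ A (x * x)) ∨ (∀ x : R, A (x * x) ≤ 0)) :
    ∀ x y : R, A (x * y) ^ 2 ≤ A (x * x) * A (y * y) := by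
  rcases hsign with h | h | h
  · intro x y; simp [h]
  · exact aux_cs_nonneg A hadd h
  · intro x y
    have := aux_cs_nonneg (fun z => -A z) (fun u v => by simp [hadd u v]; ring)
      (fun z => by simpa using h z) x y
    simp only [neg_mul_neg] at this
    nlinarith [this]
end

section
/- Let $(R,+,\cdot)$ be a commutative ring with multiplicative unit element $e$ and let $A:R\to\mathbb{R}$ be an additive function (i.e., $A(x+y)=A(x)+A(y)$ for all $x,y\in R$). If $A(xy)^2\leq A(x^2)A(y^2)$ holds for all $x,y\in R$, then one of the following conditions must be satisfied: (i) $A=0$ identically; (ii) $A(x^2)\geq 0$ for all $x\in R$; (iii) $A(x^2)\leq 0$ for all $x\in R$. -/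
/-- If `A` is additive on a commutative ring with unit and satisfies
`A (x*y)^2 ≤ A (x^2) * A (y^2)` for all `x, y`, then `A = 0`, or `A (x^2) ≥ 0` for all
`x`, or `A (x^2) ≤ 0` for all `x`. -/
theorem sign_condition_of_cauchy_schwarz
    {R : Type*} [CommRing R] (A : R → ℝ)
    (hadd : ∀ x y : R, A (x + y) = A x + A y)
    (hineq : ∀ x y : R, A (x * y) ^ 2 ≤ A (x * x) * A (y * y)) :
    (∀ x : R, A x = 0) ∨ (∀ x : R, 0 ≤ A (x * x)) ∨ (∀ x : R, A (x * x) ≤ 0) := by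
  by_cases h : ∀ x : R, 0 ≤ A (x * x)
  · exact Or.inr (Or.inl h)
  · push_neg at h
    obtain ⟨a, ha⟩ := h
    refine Or.inr (Or.inr fun y => ?_)
    have := hineq a y
    nlinarith [sq_nonneg (A (a * y))]
end

section
/- Let $(R,+,\cdot)$ be a commutative ring with multiplicative unit element $e$ and let $A:R\to\mathbb{R}$ be an additive function with $A(e)\neq 0$. Define $R_A:=\{x\in R : 0\leq A(x^2)A(e)\}$. Then $e\in R_A$, and the inequality $A(x^2)A(y^2)\leq A(xy)^2$ holds for all $x,y\in R_A$ if and only if $A(x^2)A(e)\leq A(x)^2$ holds for all $x\in R_A$. -/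
/-- If a real quadratic `a t² + 2 c t + b` is dominated by `(u t + v)²` for all rationals `t`,
with `0 ≤ a`, `0 ≤ b`, then `a * b ≤ c ^ 2`. -/
lemma aux_quad_discriminant (a b c u v : ℝ) (ha : 0 ≤ a) (hb : 0 ≤ b)
    (hrat : ∀ t : ℚ, a * (t : ℝ) ^ 2 + 2 * c * (t : ℝ) + b ≤ (u * (t : ℝ) + v) ^ 2) :
    a * b ≤ c ^ 2 := by
  have hreal : ∀ t : ℝ, a * t ^ 2 + 2 * c * t + b ≤ (u * t + v) ^ 2 := by
    intro t
    have hcl : IsClosed {t : ℝ | a * t ^ 2 + 2 * c * t + b ≤ (u * t + v) ^ 2} :=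
      isClosed_le (by fun_prop) (by fun_prop)
    have hsub : Set.range ((↑) : ℚ → ℝ) ⊆
        {t : ℝ | a * t ^ 2 + 2 * c * t + b ≤ (u * t + v) ^ 2} := by
      rintro _ ⟨q, rfl⟩
      exact hrat q
    exact closure_minimal hsub hcl (Rat.denseRange_cast t)
  rcases eq_or_lt_of_le ha with ha0 | hapos
  · nlinarith [sq_nonneg c]
  by_cases hu : u = 0
  · -- then a t² + 2ct + b ≤ v² for all t; contradiction with a > 0
    exfalso
    set t₀ : ℝ := (|v| + 1) / Real.sqrt a with ht₀
    have hsa : Real.sqrt a > 0 := Real.sqrt_pos.mpr hapos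
    have hsq : Real.sqrt a ^ 2 = a := Real.sq_sqrt ha
    have h1 := hreal t₀
    have h2 := hreal (-t₀)
    rw [hu] at h1 h2
    have ht2 : t₀ ^ 2 * a = (|v| + 1) ^ 2 := by
      rw [ht₀, div_pow, hsq, div_mul_cancel₀ _ (ne_of_gt hapos)]
    nlinarith [sq_abs v, abs_nonneg v]
  · have h0 : u * (-v / u) + v = 0 := by
      field_simp
      ring
    have h1 := hreal (-v / u)
    rw [h0] at h1
    nlinarith [sq_nonneg (a * (-v / u) + c)]

/-- For an additive `A` on a commutative ring with unit with `A 1 ≠ 0`,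
setting `R_A = {x | 0 ≤ A (x^2) * A 1}`, one has `1 ∈ R_A`, and
`A (x^2) * A (y^2) ≤ A (x*y)^2` for all `x, y ∈ R_A` iff `A (x^2) * A 1 ≤ A x ^ 2`
for all `x ∈ R_A`. -/
theorem reverse_cauchy_schwarz_iff_on_RA
    {R : Type*} [CommRing R] (A : R → ℝ)
    (hadd : ∀ x y : R, A (x + y) = A x + A y)
    (hA1 : A 1 ≠ 0) :
    (1 : R) ∈ {x : R | 0 ≤ A (x * x) * A 1} ∧
    ((∀ x ∈ {x : R | 0 ≤ A (x * x) * A 1}, ∀ y ∈ {x : R | 0 ≤ A (x * x) * A 1},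
        A (x * x) * A (y * y) ≤ A (x * y) ^ 2) ↔
      (∀ x ∈ {x : R | 0 ≤ A (x * x) * A 1}, A (x * x) * A 1 ≤ A x ^ 2)) := by
  have h1mem : (1 : R) ∈ {x : R | 0 ≤ A (x * x) * A 1} := by
    simp only [Set.mem_setOf_eq, one_mul]
    exact mul_self_nonneg _
  refine ⟨h1mem, ?_, ?_⟩
  · -- forward: take y = 1
    intro h x hx
    have := h x hx 1 h1mem
    rwa [one_mul, mul_one] at this
  · -- backward
    intro h x hx y hy
    set A' : R →+ ℝ := AddMonoidHom.mk' A hadd with hA'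
    have hAe : ∀ z : R, A z = A' z := fun z => rfl
    have Hall : ∀ z : R, A (z * z) * A 1 ≤ A z ^ 2 := by
      intro z
      by_cases hz : 0 ≤ A (z * z) * A 1
      · exact h z hz
      · nlinarith [sq_nonneg (A z)]
    set s := A 1 with hs
    set u := A x with hu
    set v := A y with hv
    set p := A (x * x) with hp
    set q := A (y * y) with hq
    set w := A (x * y) with hw
    -- integer version
    have hint : ∀ m n : ℤ, (s * p) * (m : ℝ) ^ 2 + 2 * (s * w) * ((m : ℝ) * n)
        + (s * q) * (n : ℝ) ^ 2 ≤ (u * m + v * n) ^ 2 := by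
      intro m n
      have expand : (m • x + n • y) * (m • x + n • y)
          = (m * m) • (x * x) + ((m * n) • (x * y) + ((n * m) • (x * y) + (n * n) • (y * y))) := by
        rw [add_mul, mul_add, mul_add, smul_mul_smul_comm, smul_mul_smul_comm,
          smul_mul_smul_comm, smul_mul_smul_comm, mul_comm y x, add_assoc]
      have e1 : A (m • x + n • y) = (m : ℝ) * u + (n : ℝ) * v := by
        rw [hAe, map_add, map_zsmul, map_zsmul, zsmul_eq_mul, zsmul_eq_mul]
        rw [← hAe, ← hAe, ← hu, ← hv]
      have e2 : A ((m • x + n • y) * (m • x + n • y))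
          = (m : ℝ) ^ 2 * p + 2 * ((m : ℝ) * n) * w + (n : ℝ) ^ 2 * q := by
        rw [expand, hAe, map_add, map_add, map_add, map_zsmul, map_zsmul, map_zsmul, map_zsmul,
          zsmul_eq_mul, zsmul_eq_mul, zsmul_eq_mul, zsmul_eq_mul]
        push_cast
        rw [← hAe, ← hAe, ← hAe, ← hp, ← hq, ← hw]
        ring
      have := Hall (m • x + n • y)
      rw [e1, e2] at this
      nlinarith [this]
    -- rational version
    have hrat : ∀ t : ℚ, (s * p) * (t : ℝ) ^ 2 + 2 * (s * w) * (t : ℝ) + (s * q)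
        ≤ (u * (t : ℝ) + v) ^ 2 := by
      intro t
      have hden : (0 : ℝ) < (t.den : ℝ) := by exact_mod_cast t.pos
      have hcast : (t : ℝ) = (t.num : ℝ) / (t.den : ℝ) := Rat.cast_def t
      have hkey := hint t.num (t.den : ℤ)
      push_cast at hkey
      have e : (t.num : ℝ) = (t : ℝ) * (t.den : ℝ) := by
        rw [hcast]; field_simp
      rw [e] at hkey
      nlinarith [hkey, mul_pos hden hden]
    have hx' : 0 ≤ s * p := by rw [mul_comm]; exact hx
    have hy' : 0 ≤ s * q := by rw [mul_comm]; exact hy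
    have key := aux_quad_discriminant (s * p) (s * q) (s * w) u v hx' hy' hrat
    have hs2 : 0 < s ^ 2 := by positivity
    nlinarith [key, hs2]
end

section
/- There exists a non-additive function $f:\mathbb{R}\to\mathbb{R}$ such that $f(x^2)f(1)\leq f(x)^2$ holds for all $x\in\mathbb{R}$, yet there exist $x,y\in\mathbb{R}$ with $f(x^2)f(y^2)>f(xy)^2$. Concretely, for any fixed $q\in(0,1)$, the function $f$ defined by $f(x)=x$ for $x\neq 1$ and $f(1)=q$ has these properties. -/
lemma aux_key (q : ℝ) (hq : q ∈ Set.Ioo (0:ℝ) 1) (f : ℝ → ℝ)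
    (hf : ∀ x : ℝ, f x = if x = 1 then q else x) :
    ¬ (∀ x y : ℝ, f (x + y) = f x + f y) ∧
    (∀ x : ℝ, f (x ^ 2) * f 1 ≤ f x ^ 2) ∧
    ∃ x y : ℝ, f (x * y) ^ 2 < f (x ^ 2) * f (y ^ 2) := by
  obtain ⟨hq0, hq1⟩ := hq
  refine ⟨?_, ?_, 2, 1/2, ?_⟩
  · intro h
    have h2 := h 1 1
    simp only [hf] at h2
    norm_num at h2
    linarith
  · intro x
    simp only [hf]
    split_ifs with h1 h2 h3 <;>
      first
      | (subst h3; norm_num at h1)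
      | nlinarith [sq_nonneg x]
  · simp only [hf]
    norm_num
    rw [abs_lt]
    constructor <;> linarith

/-- There is a non-additive `f : ℝ → ℝ` with `f (x^2) * f 1 ≤ f x ^ 2`
for all `x`, yet `f (x^2) * f (y^2) > f (x*y)^2` for some `x, y`. Concretely, for any
`q ∈ (0,1)`, the function `f` with `f x = x` for `x ≠ 1` and `f 1 = q` works. -/
theorem exists_nonadditive_counterexample :
    (∃ f : ℝ → ℝ,
        ¬ (∀ x y : ℝ, f (x + y) = f x + f y) ∧
        (∀ x : ℝ, f (x ^ 2) * f 1 ≤ f x ^ 2) ∧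
        ∃ x y : ℝ, f (x * y) ^ 2 < f (x ^ 2) * f (y ^ 2)) ∧
    ∀ q ∈ Set.Ioo (0 : ℝ) 1, ∀ f : ℝ → ℝ,
      (∀ x : ℝ, f x = if x = 1 then q else x) →
        ¬ (∀ x y : ℝ, f (x + y) = f x + f y) ∧
        (∀ x : ℝ, f (x ^ 2) * f 1 ≤ f x ^ 2) ∧
        ∃ x y : ℝ, f (x * y) ^ 2 < f (x ^ 2) * f (y ^ 2) := by
  constructor
  · exact ⟨fun x => if x = 1 then (1/2:ℝ) else x,
      aux_key (1/2) (by norm_num) _ (fun x => rfl)⟩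
  · exact fun q hq f hf => aux_key q hq f hf
end

section
/- The function $A:\mathbb{R}\to\mathbb{R}$ defined by $A(x)=|x-1|$ is continuous and not additive, satisfies $A(x^2)A(1)\leq A(x)^2$ for all $x\in\mathbb{R}$, yet for $x=2$ and $y=1/2$ one has $A(x^2)A(y^2)=9/4>0=A(xy)^2$, so the inequality $A(x^2)A(y^2)\leq A(xy)^2$ fails. -/
/-- The function `A x = |x - 1|` is continuous, not additive, satisfies
`A (x^2) * A 1 ≤ A x ^ 2` for all `x`, but for `x = 2`, `y = 1/2` one has
`A (x^2) * A (y^2) = 9/4 > 0 = A (x*y)^2`, so `A (x^2) * A (y^2) ≤ A (x*y)^2` fails. -/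
theorem abs_sub_one_counterexample
    (A : ℝ → ℝ) (hA : ∀ x : ℝ, A x = |x - 1|) :
    Continuous A ∧
    ¬ (∀ x y : ℝ, A (x + y) = A x + A y) ∧
    (∀ x : ℝ, A (x ^ 2) * A 1 ≤ A x ^ 2) ∧
    A ((2 : ℝ) ^ 2) * A ((1 / 2 : ℝ) ^ 2) = 9 / 4 ∧
    A ((2 : ℝ) * (1 / 2)) ^ 2 = 0 ∧
    (0 : ℝ) < 9 / 4 ∧
    ¬ (∀ x y : ℝ, A (x ^ 2) * A (y ^ 2) ≤ A (x * y) ^ 2) := by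
  have hAf : A = fun x => |x - 1| := funext hA
  refine ⟨?_, ?_, ?_, ?_, ?_, by norm_num, ?_⟩
  · rw [hAf]; exact (continuous_id.sub continuous_const).abs
  · intro h
    have := h 0 0
    simp [hA] at this
  · intro x
    rw [hA, hA, hA]
    simp only [sub_self, abs_zero, mul_zero]
    positivity
  · have h1 : |((1:ℝ)/2)^2 - 1| = 3/4 := by rw [abs_of_nonpos] <;> norm_num
    rw [hA, hA, h1]; norm_num
  · rw [hA]; norm_num
  · intro h
    have := h 2 (1/2)
    have h1 : |((1:ℝ)/2)^2 - 1| = 3/4 := by rw [abs_of_nonpos] <;> norm_num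
    rw [hA, hA, hA, h1] at this
    norm_num at this
end

section
/- Let $G$ be a set equipped with a binary operation $*:G\times G\to G$ (a groupoid) and let $A,B:G\to\mathbb{R}$. Assume there exist functions $f,g:G\to\mathbb{R}$ such that $A(x*y)=f(x)f(y)-g(x)g(y)$ and $B(x*y)=f(x)g(y)+g(x)f(y)$ hold for all $x,y\in G$. Then, for all $x,y\in G$, $-B(x*y)^2\leq A(x*x)A(y*y)\leq A(x*y)^2$ and $-A(x*y)^2\leq B(x*x)B(y*y)\leq B(x*y)^2$. -/
/-- If `A (x*y) = f x * f y - g x * g y` and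
`B (x*y) = f x * g y + g x * f y` on a groupoid, then
`-B(x*y)^2 ≤ A(x*x) * A(y*y) ≤ A(x*y)^2` and `-A(x*y)^2 ≤ B(x*x) * B(y*y) ≤ B(x*y)^2`. -/
theorem system_inequalities_diff_sym
    {G : Type*} (op : G → G → G) (A B : G → ℝ) (f g : G → ℝ)
    (hA : ∀ x y : G, A (op x y) = f x * f y - g x * g y)
    (hB : ∀ x y : G, B (op x y) = f x * g y + g x * f y) :
    ∀ x y : G,
      (-B (op x y) ^ 2 ≤ A (op x x) * A (op y y) ∧
        A (op x x) * A (op y y) ≤ A (op x y) ^ 2) ∧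
      (-A (op x y) ^ 2 ≤ B (op x x) * B (op y y) ∧
        B (op x x) * B (op y y) ≤ B (op x y) ^ 2) := by
  intro x y
  simp only [hA, hB]
  refine ⟨⟨?_, ?_⟩, ?_, ?_⟩ <;>
    nlinarith [sq_nonneg (f x * g y - g x * f y), sq_nonneg (f x * f y - g x * g y),
      sq_nonneg (f x * g y + g x * f y), sq_nonneg (f x * f y + g x * g y)]
end

section
/- Let $G$ be a set equipped with a binary operation $*:G\times G\to G$ (a groupoid) and let $\varphi:G\to\mathbb{C}$ be a homomorphism into the multiplicative semigroup of complex numbers, i.e., $\varphi(x*y)=\varphi(x)\varphi(y)$ for all $x,y\in G$. Define $A:=\operatorname{Re}\varphi$ and $B:=\operatorname{Im}\varphi$. Then, for all $x,y\in G$, $-B(x*y)^2\leq A(x*x)A(y*y)\leq A(x*y)^2$ and $-A(x*y)^2\leq B(x*x)B(y*y)\leq B(x*y)^2$. -/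
/-- If `φ : G → ℂ` is multiplicative over a groupoid `(G, op)` and
`A = Re φ`, `B = Im φ`, then `-B(x*y)^2 ≤ A(x*x) A(y*y) ≤ A(x*y)^2` and
`-A(x*y)^2 ≤ B(x*x) B(y*y) ≤ B(x*y)^2`. -/
theorem complex_hom_inequalities
    {G : Type*} (op : G → G → G) (φ : G → ℂ)
    (hφ : ∀ x y : G, φ (op x y) = φ x * φ y)
    (A B : G → ℝ) (hA : ∀ x : G, A x = (φ x).re) (hB : ∀ x : G, B x = (φ x).im) :
    ∀ x y : G,
      (-B (op x y) ^ 2 ≤ A (op x x) * A (op y y) ∧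
        A (op x x) * A (op y y) ≤ A (op x y) ^ 2) ∧
      (-A (op x y) ^ 2 ≤ B (op x x) * B (op y y) ∧
        B (op x x) * B (op y y) ≤ B (op x y) ^ 2) := by
  intro x y
  set a := (φ x).re
  set b := (φ x).im
  set c := (φ y).re
  set d := (φ y).im
  simp only [hA, hB, hφ, Complex.mul_re, Complex.mul_im]
  refine ⟨⟨?_, ?_⟩, ?_, ?_⟩ <;> nlinarith [sq_nonneg (a*d - b*c), sq_nonneg (a*c + b*d), sq_nonneg (a*c - b*d), sq_nonneg (a*d + b*c)]
end

section
/- Let $\varphi:\mathbb{C}\to\mathbb{C}$ be an automorphism of the field $\mathbb{C}$ (a bijective ring homomorphism). Define $A:=\operatorname{Re}\varphi$ and $B:=\operatorname{Im}\varphi$. Then $A:\mathbb{C}\to\mathbb{R}$ and $B:\mathbb{C}\to\mathbb{R}$ are additive mappings, and for all $x,y\in\mathbb{C}$, $-B(xy)^2\leq A(x^2)A(y^2)\leq A(xy)^2$ and $-A(xy)^2\leq B(x^2)B(y^2)\leq B(xy)^2$. -/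
/-- If `φ : ℂ → ℂ` is a field automorphism (bijective ring
homomorphism), `A = Re φ`, `B = Im φ`, then `A` and `B` are additive, and
`-B(xy)^2 ≤ A(x^2) A(y^2) ≤ A(xy)^2` and `-A(xy)^2 ≤ B(x^2) B(y^2) ≤ B(xy)^2`. -/
theorem complex_automorphism_inequalities
    (φ : ℂ →+* ℂ) (hbij : Function.Bijective φ)
    (A B : ℂ → ℝ) (hA : ∀ x : ℂ, A x = (φ x).re) (hB : ∀ x : ℂ, B x = (φ x).im) :
    (∀ x y : ℂ, A (x + y) = A x + A y) ∧
    (∀ x y : ℂ, B (x + y) = B x + B y) ∧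
    ∀ x y : ℂ,
      (-B (x * y) ^ 2 ≤ A (x ^ 2) * A (y ^ 2) ∧
        A (x ^ 2) * A (y ^ 2) ≤ A (x * y) ^ 2) ∧
      (-A (x * y) ^ 2 ≤ B (x ^ 2) * B (y ^ 2) ∧
        B (x ^ 2) * B (y ^ 2) ≤ B (x * y) ^ 2) := by
  refine ⟨fun x y => by simp [hA, map_add], fun x y => by simp [hB, map_add], fun x y => ?_⟩
  simp only [hA, hB, map_mul, map_pow, pow_two, Complex.mul_re, Complex.mul_im]
  set a := (φ x).re
  set b := (φ x).im
  set c := (φ y).re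
  set d := (φ y).im
  refine ⟨⟨?_, ?_⟩, ?_, ?_⟩ <;> nlinarith [sq_nonneg (a*d - b*c), sq_nonneg (a*c + b*d), sq_nonneg (a*d + b*c), sq_nonneg (a*c - b*d)]
end

section
/- Let $G$ be a set equipped with a binary operation $*:G\times G\to G$ (a groupoid) and let $A,B:G\to\mathbb{R}$. Assume there exist functions $f,g:G\to\mathbb{R}$ such that $A(x*y)=f(x)f(y)+g(x)g(y)$ and $B(x*y)=f(x)g(y)+g(x)f(y)$ hold for all $x,y\in G$. Then, for all $x,y\in G$, $B(x*x)B(y*y)\leq A(x*y)^2\leq A(x*x)A(y*y)$ and $B(x*x)B(y*y)\leq B(x*y)^2\leq A(x*x)A(y*y)$. -/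
/-- If `A (x*y) = f x * f y + g x * g y` and
`B (x*y) = f x * g y + g x * f y` on a groupoid, then
`B(x*x) B(y*y) ≤ A(x*y)^2 ≤ A(x*x) A(y*y)` and
`B(x*x) B(y*y) ≤ B(x*y)^2 ≤ A(x*x) A(y*y)`. -/
theorem system_inequalities_sum_sym
    {G : Type*} (op : G → G → G) (A B : G → ℝ) (f g : G → ℝ)
    (hA : ∀ x y : G, A (op x y) = f x * f y + g x * g y)
    (hB : ∀ x y : G, B (op x y) = f x * g y + g x * f y) :
    ∀ x y : G,
      (B (op x x) * B (op y y) ≤ A (op x y) ^ 2 ∧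
        A (op x y) ^ 2 ≤ A (op x x) * A (op y y)) ∧
      (B (op x x) * B (op y y) ≤ B (op x y) ^ 2 ∧
        B (op x y) ^ 2 ≤ A (op x x) * A (op y y)) := by
  intro x y
  rw [hA, hA, hA, hB, hB, hB]
  refine ⟨⟨?_, ?_⟩, ?_, ?_⟩ <;>
  nlinarith [sq_nonneg (f x * f y - g x * g y), sq_nonneg (f x * g y - g x * f y),
    sq_nonneg (f x * f y + g x * g y), sq_nonneg (f x * g y + g x * f y)]
end
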